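/- Let G be an irreducible graph-directed matrix product system with irreducibility family H. Then there exist constants A, B > 0 such that for any finite path η ∈ Σ*, there exists some φ ∈ H such that ηφ is a cycle (a path beginning and ending at the same vertex) and A·‖T(η)‖ ≤ spr T(ηφ) ≤ B·‖T(η)‖. -/

import Mathlib

/-!
Let `(i, j)` be a largest entry of `T(η)`; it lies in the block of the start and end vertices of
`η`, so `‖T(η)‖ ≤ N² T(η)ᵢⱼ` with `N = ∑ᵥ d(v)`. Closing `η` by some `φ ∈ H` with `T(φ)ⱼᵢ > 0`,
hence `T(φ)ⱼᵢ ≥ δ` for the least positive entry `δ` of the finitely many `T(φ)`, gives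
`T(ηφ)ᵢᵢ ≥ δ T(η)ᵢⱼ`. A diagonal entry of a non-negative matrix is at most its spectral radius
(a weak Perron–Frobenius theorem: some non-negative eigenvector has an eigenvalue dominating the
diagonal), and the spectral radius is at most the sum of the entries, which is submultiplicative.
-/

open Filter Topology

/-- A graph-directed matrix product system: a finite directed graph (multiple
edges allowed) with a dimension for each vertex, a non-negative transition
matrix for each edge (encoded as a block of a big matrix indexed by
`(v : V) × Fin (dim v)`, supported on the `(src e, tgt e)` block), and a
weight `W e ∈ (0,1)` for each edge. -/
structure GMPS where
  V : Type
  E : Type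
  [fintV : Fintype V]
  [decV : DecidableEq V]
  [fintE : Fintype E]
  [decE : DecidableEq E]
  src : E → V
  tgt : E → V
  dim : V → ℕ
  dim_pos : ∀ v, 0 < dim v
  T : E → Matrix ((v : V) × Fin (dim v)) ((v : V) × Fin (dim v)) ℝ
  T_nonneg : ∀ e i j, 0 ≤ T e i j
  T_block : ∀ e i j, T e i j ≠ 0 → i.1 = src e ∧ j.1 = tgt e
  W : E → ℝ
  W_pos : ∀ e, 0 < W e
  W_lt_one : ∀ e, W e < 1

attribute [instance] GMPS.fintV GMPS.decV GMPS.fintE GMPS.decE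

namespace GMPS

variable (G : GMPS)

/-- The global index type for the block matrices. -/
abbrev Idx := (v : G.V) × Fin (G.dim v)

/-- A finite sequence of edges is a path when consecutive edges are compatible. -/
def IsPath (l : List G.E) : Prop := l.Chain' fun e e' => G.tgt e = G.src e'

/-- A (nonempty) path starts at the source of its first edge. -/
def startsAt (l : List G.E) (v : G.V) : Prop := ∃ e, l.head? = some e ∧ G.src e = v

/-- A (nonempty) path ends at the target of its last edge. -/
def endsAt (l : List G.E) (v : G.V) : Prop := ∃ e, l.getLast? = some e ∧ G.tgt e = v

/-- `l` is a (nonempty) path from `v₁` to `v₂`. -/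
def PathFrom (l : List G.E) (v₁ v₂ : G.V) : Prop :=
  G.IsPath l ∧ G.startsAt l v₁ ∧ G.endsAt l v₂

/-- The underlying graph is strongly connected. -/
def StronglyConnected : Prop := ∀ v₁ v₂ : G.V, ∃ l, G.PathFrom l v₁ v₂

/-- The product `T(e₁) ⋯ T(eₙ)` of the transition matrices along a path. -/
noncomputable def Tp (l : List G.E) : Matrix G.Idx G.Idx ℝ := (l.map G.T).prod

/-- The product `W(e₁) ⋯ W(eₙ)` of the weights along a path. -/
def Wp (l : List G.E) : ℝ := (l.map G.W).prod

/-- The norm of a matrix: the sum of its entries. -/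
noncomputable def mnorm (M : Matrix G.Idx G.Idx ℝ) : ℝ := ∑ i, ∑ j, M i j

/-- `Σ_t`: the paths `η` with `W(η) < t ≤ W(η⁻)` and `‖T(η)‖ > 0`. -/
def SigmaT (t : ℝ) : Set (List G.E) :=
  {l | G.IsPath l ∧ l ≠ [] ∧ G.Wp l < t ∧ t ≤ G.Wp l.dropLast ∧ 0 < G.mnorm (G.Tp l)}

/-- `H` is an irreducibility family: for all vertices `v₁, v₂` and all indices
`i ≤ d(v₁)`, `j ≤ d(v₂)` there is `γ ∈ H` from `v₁` to `v₂` with `T(γ)_{i,j} > 0`. -/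
def IrredFamily (H : Finset (List G.E)) : Prop :=
  ∀ (v₁ v₂ : G.V) (i : Fin (G.dim v₁)) (j : Fin (G.dim v₂)),
    ∃ γ ∈ H, G.PathFrom γ v₁ v₂ ∧ 0 < G.Tp γ ⟨v₁, i⟩ ⟨v₂, j⟩

/-- The matrix product system is irreducible. -/
def Irreducible : Prop := ∃ H : Finset (List G.E), G.IrredFamily H

/-- An infinite path in the graph. -/
def IsInfPath (γ : ℕ → G.E) : Prop := ∀ n, G.tgt (γ n) = G.src (γ (n + 1))

/-- The prefix `γ|n` of an infinite path. -/
def pfx (γ : ℕ → G.E) (n : ℕ) : List G.E := (List.range n).map γ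

/-- The quotient `log ‖T(γ|n)‖ / log W(γ|n)` whose `liminf`/`limsup`/limit are
the lower/upper Lyapunov exponent and Lyapunov exponent of `γ`. -/
noncomputable def lyapQ (γ : ℕ → G.E) (n : ℕ) : ℝ :=
  Real.log (G.mnorm (G.Tp (G.pfx γ n))) / Real.log (G.Wp (G.pfx γ n))

/-- `min_{η ∈ Σ_t} log ‖T(η)‖ / log t`. -/
noncomputable def minQ (t : ℝ) : ℝ :=
  sInf ((fun l => Real.log (G.mnorm (G.Tp l)) / Real.log t) '' G.SigmaT t)

/-- `max_{η ∈ Σ_t} log ‖T(η)‖ / log t`. -/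
noncomputable def maxQ (t : ℝ) : ℝ :=
  sSup ((fun l => Real.log (G.mnorm (G.Tp l)) / Real.log t) '' G.SigmaT t)

/-- The spectral radius of a (non-negative) square matrix. -/
noncomputable def spr (M : Matrix G.Idx G.Idx ℝ) : ℝ := (spectralRadius ℝ M).toReal

end GMPS

open Set
open scoped ENNReal

theorem Finite.exists_pos_le_of_pos {α : Type*} [Finite α] (f : α → ℝ) :
    ∃ δ > 0, ∀ a, 0 < f a → δ ≤ f a := by
  rcases isEmpty_or_nonempty {a // 0 < f a} with h | h
  · exact ⟨1, one_pos, fun a ha => (h.false ⟨a, ha⟩).elim⟩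
  · obtain ⟨⟨a₀, ha₀⟩, hmin⟩ := Finite.exists_min fun a : {a // 0 < f a} => f a
    exact ⟨f a₀, ha₀, fun a ha => hmin ⟨a, ha⟩⟩

theorem exists_pos_mul_le_of_pos {ι : Type*} [Finite ι] {a b : ι → ℝ} (hb : ∀ i, 0 < b i) :
    ∃ ε > 0, ∀ i, ε * a i ≤ b i := by
  have : ∀ᶠ ε in 𝓝 (0 : ℝ), ∀ i, ε * a i < b i :=
    eventually_all.mpr fun i => (continuous_id.mul continuous_const).continuousAt.eventually_lt
      continuousAt_const (by simpa using hb i)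
  obtain ⟨ε, hε, hε0⟩ :=
    ((this.filter_mono (nhdsWithin_le_nhds (s := Ioi 0))).and self_mem_nhdsWithin).exists
  exact ⟨ε, hε0, fun i => (hε i).le⟩

namespace Matrix

variable {n : Type*} [Fintype n]

theorem pos_of_mem_stdSimplex {x : n → ℝ} (hx : x ∈ stdSimplex ℝ n) : 0 < x :=
  lt_of_le_of_ne hx.1 fun h => by simpa [← h] using hx.2

theorem sum_mulVec_eq_of_mulVec_eq_smul {M : Matrix n n ℝ} {x : n → ℝ} {r : ℝ}
    (hx : x ∈ stdSimplex ℝ n) (h : M *ᵥ x = r • x) : ∑ i, (M *ᵥ x) i = r := by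
  simp [h, ← Finset.mul_sum, hx.2]

theorem le_sum_of_smul_le_mulVec {M : Matrix n n ℝ} (hM : ∀ i j, 0 ≤ M i j) {x : n → ℝ}
    {r : ℝ} (hx : x ∈ stdSimplex ℝ n) (h : r • x ≤ M *ᵥ x) : r ≤ ∑ i, ∑ j, M i j :=
  calc r = ∑ i, r * x i := by rw [← Finset.mul_sum, hx.2, mul_one]
    _ ≤ ∑ i, ∑ j, M i j * x j := Finset.sum_le_sum fun i _ => h i
    _ ≤ ∑ i, ∑ j, M i j := by
      gcongr with i _ j _
      exact mul_le_of_le_one_right (hM i j) (mem_Icc_of_mem_stdSimplex hx j).2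

theorem mulVec_pos_of_pos {M : Matrix n n ℝ} (hM : ∀ i j, 0 < M i j) {y : n → ℝ} (hy : 0 < y)
    (i : n) : 0 < (M *ᵥ y) i := by
  obtain ⟨k, hk⟩ := (Pi.lt_def.mp hy).2
  exact Finset.sum_pos' (fun j _ => mul_nonneg (hM i j).le (hy.le j))
    ⟨k, Finset.mem_univ k, mul_pos (hM i k) hk⟩

theorem exists_lt_smul_le_mulVec_of_pos {M : Matrix n n ℝ} (hM : ∀ i j, 0 < M i j)
    {x : n → ℝ} (hx : x ∈ stdSimplex ℝ n) {r : ℝ} (hrx : r • x ≤ M *ᵥ x) (hne : M *ᵥ x ≠ r • x) :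
    ∃ r' > r, ∃ x' ∈ stdSimplex ℝ n, r' • x' ≤ M *ᵥ x' := by
  set z := M *ᵥ x
  have hz : ∀ i, 0 < z i := mulVec_pos_of_pos hM (pos_of_mem_stdSimplex hx)
  -- `M *ᵥ z - r • z = M *ᵥ (z - r • x)` is positive, since `z - r • x` is non-negative and nonzero
  have hMz : ∀ i, 0 < (M *ᵥ z - r • z) i := by
    rw [← mulVec_smul, ← mulVec_sub]
    exact mulVec_pos_of_pos hM (lt_of_le_of_ne (sub_nonneg.2 hrx) (sub_ne_zero.2 hne).symm)
  obtain ⟨ε, hε, hεz⟩ := exists_pos_mul_le_of_pos (a := z) hMz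
  obtain ⟨k, -⟩ := (Pi.lt_def.mp (pos_of_mem_stdSimplex hx)).2
  have hzsum : 0 < ∑ i, z i := Finset.sum_pos (fun i _ => hz i) ⟨k, Finset.mem_univ k⟩
  refine ⟨r + ε, by linarith, (∑ i, z i)⁻¹ • z, ⟨fun i => ?_, ?_⟩, fun i => ?_⟩
  · exact mul_nonneg (inv_nonneg.2 hzsum.le) (hz i).le
  · simp [← Finset.mul_sum, hzsum.ne']
  · have := hεz i
    simp only [mulVec_smul, Pi.smul_apply, smul_eq_mul, Pi.sub_apply] at this ⊢
    rw [mul_left_comm]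
    exact mul_le_mul_of_nonneg_left (by linarith) (inv_nonneg.2 hzsum.le)

theorem sum_mul_le_sum_mul_sum {A B : Matrix n n ℝ} (hA : ∀ i j, 0 ≤ A i j)
    (hB : ∀ i j, 0 ≤ B i j) :
    ∑ i, ∑ j, (A * B) i j ≤ (∑ i, ∑ j, A i j) * ∑ i, ∑ j, B i j :=
  calc ∑ i, ∑ j, (A * B) i j = ∑ i, ∑ k, A i k * ∑ j, B k j := by
        simp only [mul_apply, Finset.mul_sum]
        exact Finset.sum_congr rfl fun i _ => Finset.sum_comm
    _ ≤ ∑ i, ∑ k, A i k * ∑ k', ∑ j, B k' j :=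
        Finset.sum_le_sum fun i _ => Finset.sum_le_sum fun k _ => mul_le_mul_of_nonneg_left
          (Finset.single_le_sum (f := fun k' => ∑ j, B k' j)
            (fun k' _ => Finset.sum_nonneg fun j _ => hB k' j) (Finset.mem_univ k)) (hA i k)
    _ = (∑ i, ∑ j, A i j) * ∑ i, ∑ j, B i j := by simp only [Finset.sum_mul]

theorem sum_le_card_sq_mul {M : Matrix n n ℝ} {c : ℝ} (h : ∀ i j, M i j ≤ c) :
    ∑ i, ∑ j, M i j ≤ Fintype.card n ^ 2 * c :=
  calc ∑ i, ∑ j, M i j ≤ ∑ _i : n, ∑ _j : n, c := by gcongr with i _ j _; exact h i j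
    _ = Fintype.card n ^ 2 * c := by simp [sq, mul_assoc]

variable [DecidableEq n]

theorem mem_spectrum_of_mulVec_eq_smul {K : Type*} [Field K] {M : Matrix n n K} {x : n → K}
    {r : K} (hx : x ≠ 0) (h : M *ᵥ x = r • x) : r ∈ spectrum K M := by
  rw [← spectrum_toLin']
  exact (Module.End.hasEigenvalue_of_hasEigenvector
    ⟨Module.End.mem_eigenspace_iff.mpr (by simpa using h), hx⟩).mem_spectrum

-- The spectrum does not depend on the norm, so we may bound it by the `L∞` operator norm.
theorem spectralRadius_le_sum_of_nonneg (M : Matrix n n ℝ) (hM : ∀ i j, 0 ≤ M i j) :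
    spectralRadius ℝ M ≤ ENNReal.ofReal (∑ i, ∑ j, M i j) := by
  rcases isEmpty_or_nonempty n with hn | hn
  · simp [spectralRadius, spectrum.of_subsingleton]
  let := Matrix.linftyOpNormedRing (n := n) (α := ℝ)
  let := Matrix.linftyOpNormedAlgebra (n := n) (R := ℝ) (α := ℝ)
  refine (spectrum.spectralRadius_le_nnnorm M).trans ?_
  rw [← ENNReal.ofReal_coe_nnreal, coe_nnnorm]
  refine ENNReal.ofReal_le_ofReal ?_
  obtain ⟨i, -, hi⟩ := Finset.exists_mem_eq_sup _ Finset.univ_nonempty fun i => ∑ j, ‖M i j‖₊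
  rw [linfty_opNorm_def, hi]
  push_cast
  simp only [Real.norm_of_nonneg (hM _ _)]
  exact Finset.single_le_sum (fun i _ => Finset.sum_nonneg fun j _ => hM i j) (Finset.mem_univ i)

-- Collatz–Wielandt: a maximiser of `r` subject to `r • x ≤ M *ᵥ x` is an eigenpair.
theorem exists_mulVec_eq_smul_of_pos {M : Matrix n n ℝ} (hM : ∀ i j, 0 < M i j) (q : n) :
    ∃ x ∈ stdSimplex ℝ n, ∃ r, M q q ≤ r ∧ M *ᵥ x = r • x := by
  let K : Set ((n → ℝ) × ℝ) :=
    stdSimplex ℝ n ×ˢ Icc (M q q) (∑ i, ∑ j, M i j) ∩ {p | p.2 • p.1 ≤ M *ᵥ p.1}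
  have hK : IsCompact K := ((isCompact_stdSimplex ℝ n).prod isCompact_Icc).inter_right
    (isClosed_le (by fun_prop) (by fun_prop))
  have hqK : (Pi.single q 1, M q q) ∈ K := by
    have hsingle : M q q • Pi.single q 1 ≤ M *ᵥ Pi.single q 1 := fun i => by
      by_cases h : i = q
      · subst h; simp
      · simp [h, (hM i q).le]
    exact ⟨⟨single_mem_stdSimplex ℝ q, le_rfl, le_sum_of_smul_le_mulVec (fun i j => (hM i j).le)
      (single_mem_stdSimplex ℝ q) hsingle⟩, hsingle⟩
  obtain ⟨⟨x, r⟩, ⟨⟨hx, hr⟩, hrx⟩, hmax⟩ := hK.exists_isMaxOn ⟨_, hqK⟩ continuous_snd.continuousOn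
  refine ⟨x, hx, r, hr.1, by_contra fun hne => ?_⟩
  obtain ⟨r', hr', x', hx', hrx'⟩ := exists_lt_smul_le_mulVec_of_pos hM hx hrx hne
  have : r' ≤ r := hmax (show (x', r') ∈ K from ⟨⟨hx', hr.1.trans hr'.le,
    le_sum_of_smul_le_mulVec (fun i j => (hM i j).le) hx' hrx'⟩, hrx'⟩)
  linarith

-- Perturb to the positive matrices `M + ε J` and let `ε → 0` within a compact set of eigenpairs,
-- normalising eigenvectors into the simplex and eigenvalues to `∑ i, (M *ᵥ x) i`.
theorem exists_mulVec_eq_smul_of_nonneg {M : Matrix n n ℝ} (hM : ∀ i j, 0 ≤ M i j) (q : n) :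
    ∃ x ∈ stdSimplex ℝ n, ∃ r, M q q ≤ r ∧ M *ᵥ x = r • x := by
  let M' : ℝ → Matrix n n ℝ := fun ε => M + ε • of fun _ _ => 1
  let ρ : ℝ × (n → ℝ) → ℝ := fun p => ∑ i, (M' p.1 *ᵥ p.2) i
  let F : Set (ℝ × (n → ℝ)) :=
    Icc 0 1 ×ˢ stdSimplex ℝ n ∩ ({p | M q q ≤ ρ p} ∩ {p | M' p.1 *ᵥ p.2 = ρ p • p.2})
  have hF : IsCompact F := (isCompact_Icc.prod (isCompact_stdSimplex ℝ n)).inter_right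
    ((isClosed_le (by fun_prop) (by fun_prop)).inter (isClosed_eq (by fun_prop) (by fun_prop)))
  have hsub : Ioc 0 1 ⊆ Prod.fst '' F := by
    intro ε hε
    have hM' : ∀ i j, M' ε i j = M i j + ε := fun i j => by simp [M']
    obtain ⟨x, hx, r, hr, hxr⟩ := exists_mulVec_eq_smul_of_pos (M := M' ε)
      (fun i j => by rw [hM']; linarith [hM i j, hε.1]) q
    have hρ : ρ (ε, x) = r := sum_mulVec_eq_of_mulVec_eq_smul hx hxr
    refine ⟨(ε, x), ⟨⟨Ioc_subset_Icc_self hε, hx⟩, ?_, ?_⟩, rfl⟩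
    · change M q q ≤ ρ (ε, x)
      linarith [hM' q q, hε.1]
    · change M' ε *ᵥ x = ρ (ε, x) • x
      rw [hρ, hxr]
  have h0 : (0 : ℝ) ∈ Prod.fst '' F :=
    (hF.image continuous_fst).isClosed.closure_subset_iff.2 hsub (by simp [closure_Ioc])
  obtain ⟨⟨_, x⟩, ⟨⟨-, hx⟩, hr, hxr⟩, rfl⟩ := h0
  exact ⟨x, hx, _, by simpa [M'] using hr, by simpa [M'] using hxr⟩

theorem diag_le_toReal_spectralRadius {M : Matrix n n ℝ} (hM : ∀ i j, 0 ≤ M i j) (q : n) :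
    M q q ≤ (spectralRadius ℝ M).toReal := by
  obtain ⟨x, hx, r, hr, hxr⟩ := exists_mulVec_eq_smul_of_nonneg hM q
  have hspec : r ∈ spectrum ℝ M :=
    mem_spectrum_of_mulVec_eq_smul (pos_of_mem_stdSimplex hx).ne' hxr
  calc M q q ≤ ‖r‖ := hr.trans (Real.le_norm_self r)
    _ = (‖r‖₊ : ℝ≥0∞).toReal := rfl
    _ ≤ (spectralRadius ℝ M).toReal :=
      ENNReal.toReal_mono (ne_top_of_le_ne_top ENNReal.ofReal_ne_top
        (spectralRadius_le_sum_of_nonneg M hM)) (le_iSup₂ (α := ℝ≥0∞) r hspec)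

end Matrix

namespace GMPS

variable (G : GMPS)

theorem Tp_append (l₁ l₂ : List G.E) : G.Tp (l₁ ++ l₂) = G.Tp l₁ * G.Tp l₂ := by
  simp [Tp]

theorem Tp_singleton (e : G.E) : G.Tp [e] = G.T e := by
  simp [Tp]

theorem Tp_nonneg (l : List G.E) (i j : G.Idx) : 0 ≤ G.Tp l i j := by
  induction l generalizing i j with
  | nil => by_cases h : i = j <;> simp [Tp, h]
  | cons e l ih =>
    simp only [Tp, List.map_cons, List.prod_cons, Matrix.mul_apply]
    exact Finset.sum_nonneg fun k _ => mul_nonneg (G.T_nonneg e i k) (ih k j)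

theorem mnorm_Tp_nonneg (l : List G.E) : 0 ≤ G.mnorm (G.Tp l) :=
  Finset.sum_nonneg fun i _ => Finset.sum_nonneg fun j _ => G.Tp_nonneg l i j

theorem spr_Tp_append_le (η φ : List G.E) :
    G.spr (G.Tp (η ++ φ)) ≤ G.mnorm (G.Tp η) * G.mnorm (G.Tp φ) :=
  calc G.spr (G.Tp (η ++ φ)) ≤ G.mnorm (G.Tp (η ++ φ)) :=
        ENNReal.toReal_le_of_le_ofReal (G.mnorm_Tp_nonneg _)
          (Matrix.spectralRadius_le_sum_of_nonneg _ (G.Tp_nonneg _))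
    _ ≤ G.mnorm (G.Tp η) * G.mnorm (G.Tp φ) := by
        rw [G.Tp_append]; exact Matrix.sum_mul_le_sum_mul_sum (G.Tp_nonneg η) (G.Tp_nonneg φ)

theorem Tp_mul_Tp_le_spr_Tp_append (η φ : List G.E) (i j : G.Idx) :
    G.Tp η i j * G.Tp φ j i ≤ G.spr (G.Tp (η ++ φ)) :=
  calc G.Tp η i j * G.Tp φ j i ≤ G.Tp (η ++ φ) i i := by
        rw [G.Tp_append, Matrix.mul_apply]
        exact Finset.single_le_sum (f := fun k => G.Tp η i k * G.Tp φ k i)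
          (fun k _ => mul_nonneg (G.Tp_nonneg η i k) (G.Tp_nonneg φ k i)) (Finset.mem_univ j)
    _ ≤ G.spr (G.Tp (η ++ φ)) := Matrix.diag_le_toReal_spectralRadius (G.Tp_nonneg _) i

variable {G}

theorem src_head_of_Tp_ne_zero {η : List G.E} (hη : η ≠ []) {i j : G.Idx}
    (h : G.Tp η i j ≠ 0) : i.1 = G.src (η.head hη) := by
  obtain ⟨e, l, rfl⟩ := List.exists_cons_of_ne_nil hη
  rw [← List.singleton_append, Tp_append, Tp_singleton, Matrix.mul_apply] at h
  obtain ⟨k, -, hk⟩ := Finset.exists_ne_zero_of_sum_ne_zero h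
  exact (G.T_block e i k (left_ne_zero_of_mul hk)).1

theorem tgt_getLast_of_Tp_ne_zero {η : List G.E} (hη : η ≠ []) {i j : G.Idx}
    (h : G.Tp η i j ≠ 0) : j.1 = G.tgt (η.getLast hη) := by
  rw [← List.dropLast_append_getLast hη, Tp_append, Tp_singleton, Matrix.mul_apply] at h
  obtain ⟨k, -, hk⟩ := Finset.exists_ne_zero_of_sum_ne_zero h
  exact (G.T_block _ k j (right_ne_zero_of_mul hk)).2

theorem exists_max_entry_Tp {η : List G.E} (hη : η ≠ []) :
    ∃ i j : G.Idx, i.1 = G.src (η.head hη) ∧ j.1 = G.tgt (η.getLast hη) ∧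
      ∀ i' j', G.Tp η i' j' ≤ G.Tp η i j := by
  let block := Finset.univ.filter fun p : G.Idx × G.Idx =>
    p.1.1 = G.src (η.head hη) ∧ p.2.1 = G.tgt (η.getLast hη)
  have hblock : block.Nonempty :=
    ⟨(⟨G.src (η.head hη), ⟨0, G.dim_pos _⟩⟩, ⟨G.tgt (η.getLast hη), ⟨0, G.dim_pos _⟩⟩),
      by simp [block]⟩
  obtain ⟨⟨i, j⟩, hij, hmax⟩ := block.exists_max_image (fun p => G.Tp η p.1 p.2) hblock
  refine ⟨i, j, (Finset.mem_filter.1 hij).2.1, (Finset.mem_filter.1 hij).2.2, fun i' j' => ?_⟩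
  by_cases h : G.Tp η i' j' = 0
  · exact h ▸ G.Tp_nonneg η i j
  · exact hmax (i', j') (Finset.mem_filter.2 ⟨Finset.mem_univ _,
      src_head_of_Tp_ne_zero hη h, tgt_getLast_of_Tp_ne_zero hη h⟩)

theorem pathFrom_head_getLast {η : List G.E} (hpath : G.IsPath η) (hη : η ≠ []) :
    G.PathFrom η (G.src (η.head hη)) (G.tgt (η.getLast hη)) :=
  ⟨hpath, ⟨_, List.head?_eq_some_head hη, rfl⟩, ⟨_, List.getLast?_eq_some_getLast hη, rfl⟩⟩

theorem PathFrom.append {η φ : List G.E} {a b c : G.V} (hη : G.PathFrom η a b)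
    (hφ : G.PathFrom φ b c) : G.PathFrom (η ++ φ) a c := by
  obtain ⟨hηp, ⟨e₁, he₁, rfl⟩, ⟨e₂, he₂, rfl⟩⟩ := hη
  obtain ⟨hφp, ⟨e₃, he₃, hs⟩, ⟨e₄, he₄, rfl⟩⟩ := hφ
  have hηne : η ≠ [] := by rintro rfl; simp at he₁
  have hφne : φ ≠ [] := by rintro rfl; simp at he₃
  refine ⟨List.isChain_append.mpr ⟨hηp, hφp, ?_⟩, ⟨e₁, ?_, rfl⟩, ⟨e₄, ?_, rfl⟩⟩
  · simp_all
  · rwa [List.head?_append_of_ne_nil η hηne]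
  · rwa [List.getLast?_append_of_ne_nil η hφne]

end GMPS

theorem gmps_cycle_spectral_radius_estimate_general (G : GMPS)
    (H : Finset (List G.E)) (hH : G.IrredFamily H) :
    ∃ A B : ℝ, 0 < A ∧ 0 < B ∧
      ∀ η : List G.E, G.IsPath η → η ≠ [] →
        ∃ φ ∈ H, (∃ v : G.V, G.PathFrom (η ++ φ) v v) ∧
          A * G.mnorm (G.Tp η) ≤ G.spr (G.Tp (η ++ φ)) ∧
          G.spr (G.Tp (η ++ φ)) ≤ B * G.mnorm (G.Tp η) := by
  obtain ⟨δ, hδ, hδH⟩ := Finite.exists_pos_le_of_pos fun x : H × G.Idx × G.Idx =>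
    G.Tp x.1 x.2.1 x.2.2
  set N : ℝ := Fintype.card G.Idx ^ 2
  set B := ∑ φ ∈ H, G.mnorm (G.Tp φ) + 1
  have hHB : ∀ φ ∈ H, G.mnorm (G.Tp φ) ≤ B := fun φ hφ => by
    linarith [Finset.single_le_sum (fun ψ _ => G.mnorm_Tp_nonneg ψ) hφ]
  have hB : 0 < B := by linarith [Finset.sum_nonneg fun ψ (_ : ψ ∈ H) => G.mnorm_Tp_nonneg ψ]
  refine ⟨δ / (N + 1), B, by positivity, hB, fun η hpath hη => ?_⟩
  obtain ⟨i, j, hi, hj, hmax⟩ := G.exists_max_entry_Tp hη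
  obtain ⟨φ, hφH, hφ, hφji⟩ := hH j.1 i.1 j.2 i.2
  have hm : G.mnorm (G.Tp η) ≤ N * G.Tp η i j := Matrix.sum_le_card_sq_mul hmax
  refine ⟨φ, hφH, ⟨_, (GMPS.pathFrom_head_getLast hpath hη).append (hi ▸ hj ▸ hφ)⟩, ?_, ?_⟩
  · calc δ / (N + 1) * G.mnorm (G.Tp η) ≤ G.Tp η i j * δ := by
          rw [div_mul_eq_mul_div, div_le_iff₀ (by positivity)]
          nlinarith [G.Tp_nonneg η i j]
      _ ≤ G.Tp η i j * G.Tp φ j i :=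
          mul_le_mul_of_nonneg_left (hδH (⟨φ, hφH⟩, j, i) hφji) (G.Tp_nonneg η i j)
      _ ≤ G.spr (G.Tp (η ++ φ)) := G.Tp_mul_Tp_le_spr_Tp_append η φ i j
  · calc G.spr (G.Tp (η ++ φ)) ≤ G.mnorm (G.Tp η) * G.mnorm (G.Tp φ) := G.spr_Tp_append_le η φ
      _ ≤ B * G.mnorm (G.Tp η) := by
          rw [mul_comm]; exact mul_le_mul_of_nonneg_right (hHB φ hφH) (G.mnorm_Tp_nonneg η)

/-- **Closing lemma.** In an irreducible matrix product system with
irreducibility family `H`, there are constants `A, B > 0` such that any path `η`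
can be closed up into a cycle `ηφ` with `φ ∈ H` and
`A ‖T(η)‖ ≤ spr T(ηφ) ≤ B ‖T(η)‖`. -/
theorem gmps_cycle_spectral_radius_estimate (G : GMPS) (hsc : G.StronglyConnected)
    (H : Finset (List G.E)) (hH : G.IrredFamily H) :
    ∃ A B : ℝ, 0 < A ∧ 0 < B ∧
      ∀ η : List G.E, G.IsPath η → η ≠ [] →
        ∃ φ ∈ H, (∃ v : G.V, G.PathFrom (η ++ φ) v v) ∧
          A * G.mnorm (G.Tp η) ≤ G.spr (G.Tp (η ++ φ)) ∧
          G.spr (G.Tp (η ++ φ)) ≤ B * G.mnorm (G.Tp η) :=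
  gmps_cycle_spectral_radius_estimate_general G H hH
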